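/- Given 1 ≤ p ≤ q, suppose A ∈ ℂ^{m×N} satisfies the ℓ^q-robust null space property of order s with constants 0 < ρ < 1 and τ > 0 relative to a norm ‖·‖ on ℂ^m. Then for any z, w ∈ ℂ^N, ‖z − w‖_p ≤ (C/s^(1−1/p)) (‖z‖_1 − ‖w‖_1 + 2σ_s(w)_1) + (D/s^(1/q−1/p)) ‖A(z−w)‖, where C = (1+ρ)²/(1−ρ) and D = (3+ρ)τ/(1−ρ). -/

import Mathlib

noncomputable def lpNorm {n : ℕ} (p : ℝ) (x : Fin n → ℂ) : ℝ :=
  (∑ i, ‖x i‖ ^ p) ^ (1 / p)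

/-- Best `s`-term approximation error of `x` in the `ℓ^1` norm. -/
noncomputable def bestApprox1 {n : ℕ} (s : ℕ) (x : Fin n → ℂ) : ℝ :=
  sInf ((fun w => lpNorm 1 (x - w)) ''
    {w : Fin n → ℂ | ∃ S : Finset (Fin n), S.card ≤ s ∧ ∀ i ∉ S, w i = 0})

/-- Restriction of `z` to the coordinates in `S` (zero elsewhere). -/
def restrictTo {n : ℕ} (S : Finset (Fin n)) (z : Fin n → ℂ) : Fin n → ℂ :=
  fun i => if i ∈ S then z i else 0

/-- `ℓ^q`-robust null space property of order `s` with constants `ρ, τ` relative to the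
norm `nn` on `ℂ^m`. -/
def RNSP {m N : ℕ} (A : Matrix (Fin m) (Fin N) ℂ) (nn : (Fin m → ℂ) → ℝ)
    (q : ℝ) (s : ℕ) (ρ τ : ℝ) : Prop :=
  ∀ S : Finset (Fin N), S.card ≤ s → ∀ v : Fin N → ℂ,
    lpNorm q (restrictTo S v) ≤
      (s : ℝ) ^ (1 / q - 1) * ρ * lpNorm 1 (restrictTo Sᶜ v) + τ * nn (A.mulVec v)

/-!
Write `v = z - w`. On a set `S` carrying `s` largest entries of `w`, the null space property in
its `ℓ¹` form `‖v_S‖₁ ≤ ρ ‖v_{S̄}‖₁ + s^(1-1/q) τ ‖Av‖` combines with the cone inequality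
`‖v_{S̄}‖₁ ≤ ‖z‖₁ - ‖w‖₁ + 2 ‖w_{S̄}‖₁ + ‖v_S‖₁` into a bound on `‖v‖₁`. For `‖v‖_p`, split along a
set `S` carrying `s` largest entries of `v`: on `S` use Hölder and the null space property; off `S`
every entry is at most `‖v‖₁ / s`, which gives `‖v_{S̄}‖_p ≤ s^(1/p-1) ‖v‖₁` (Stechkin).
-/

open Finset

section FiniteSums

variable {ι : Type*}

theorem rpow_sum_rpow_le_card_rpow_mul (S : Finset ι) {f : ι → ℝ} (hf : ∀ i ∈ S, 0 ≤ f i)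
    {r t : ℝ} (hr : 0 < r) (hrt : r ≤ t) :
    (∑ i ∈ S, f i ^ r) ^ (1 / r) ≤ (#S : ℝ) ^ (1 / r - 1 / t) * (∑ i ∈ S, f i ^ t) ^ (1 / t) := by
  have ht : 0 < t := hr.trans_le hrt
  have hfr : ∀ i ∈ S, 0 ≤ f i ^ r := fun i hi => Real.rpow_nonneg (hf i hi) r
  have hpow : ∀ i ∈ S, (f i ^ r) ^ (t / r) = f i ^ t := fun i hi => by
    rw [← Real.rpow_mul (hf i hi), mul_div_cancel₀ _ hr.ne']
  have key := Real.rpow_sum_le_const_mul_sum_rpow_of_nonneg (s := S) ((one_le_div hr).2 hrt) hfr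
  rw [sum_congr rfl hpow] at key
  calc (∑ i ∈ S, f i ^ r) ^ (1 / r) = ((∑ i ∈ S, f i ^ r) ^ (t / r)) ^ (1 / t) := by
        rw [← Real.rpow_mul (sum_nonneg hfr)]
        congr 1
        field_simp
    _ ≤ ((#S : ℝ) ^ (t / r - 1) * ∑ i ∈ S, f i ^ t) ^ (1 / t) := by
        gcongr
        exact Real.rpow_nonneg (sum_nonneg hfr) _
    _ = _ := by
        rw [Real.mul_rpow (by positivity) (sum_nonneg fun i hi => Real.rpow_nonneg (hf i hi) t),
          ← Real.rpow_mul (by positivity)]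
        congr 2
        field_simp

theorem exists_card_le_forall_sum_le [Fintype ι] (f : ι → ℝ) (s : ℕ) :
    ∃ S : Finset ι, #S ≤ s ∧ ∀ T : Finset ι, #T ≤ s → ∑ i ∈ T, f i ≤ ∑ i ∈ S, f i := by
  classical
  obtain ⟨S, hS, hmax⟩ := exists_max_image ((univ : Finset (Finset ι)).filter (#· ≤ s))
    (fun S => ∑ i ∈ S, f i) ⟨∅, by simp⟩
  exact ⟨S, (mem_filter.1 hS).2, fun T hT => hmax T (by simp [hT])⟩

theorem card_mul_le_sum_of_forall_sum_le [DecidableEq ι] {f : ι → ℝ} (hf : ∀ i, 0 ≤ f i)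
    {s : ℕ} {S : Finset ι} (hS : #S ≤ s)
    (hmax : ∀ T : Finset ι, #T ≤ s → ∑ i ∈ T, f i ≤ ∑ i ∈ S, f i) {i : ι} (hi : i ∉ S) :
    s * f i ≤ ∑ j ∈ S, f j := by
  rcases Nat.lt_or_eq_of_le hS with hlt | heq
  · have h := hmax (insert i S) (by rw [card_insert_of_notMem hi]; exact hlt)
    rw [sum_insert hi] at h
    rw [le_antisymm (by linarith) (hf i), mul_zero]
    exact sum_nonneg fun j _ => hf j
  · rw [← heq, ← nsmul_eq_mul, ← sum_const]
    refine sum_le_sum fun j hj => ?_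
    have hi' : i ∉ S.erase j := fun h => hi (mem_of_mem_erase h)
    have h := hmax (insert i (S.erase j))
      (by
        have := card_pos.2 ⟨j, hj⟩
        rw [card_insert_of_notMem hi', card_erase_of_mem hj]
        omega)
    rw [sum_insert hi', ← sum_erase_add S f hj] at h
    linarith

theorem rpow_sum_rpow_le_of_mul_le (T : Finset ι) {f : ι → ℝ} (hf : ∀ i ∈ T, 0 ≤ f i)
    {s n p : ℝ} (hs : 0 < s) (hp : 1 ≤ p) (hfs : ∀ i ∈ T, s * f i ≤ n)
    (hsum : ∑ i ∈ T, f i ≤ n) :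
    (∑ i ∈ T, f i ^ p) ^ (1 / p) ≤ s ^ (1 / p - 1) * n := by
  have hn : 0 ≤ n := (sum_nonneg hf).trans hsum
  have hp0 : p ≠ 0 := by positivity
  have hpow : ∀ x : ℝ, 0 ≤ x → x ^ p = x ^ (p - 1) * x := fun x hx => by
    conv_lhs => rw [← sub_add_cancel p 1]
    rw [Real.rpow_add' hx (by simpa using hp0), Real.rpow_one]
  have hbound : ∑ i ∈ T, f i ^ p ≤ n ^ p * s ^ (1 - p) :=
    calc ∑ i ∈ T, f i ^ p ≤ ∑ i ∈ T, (n / s) ^ (p - 1) * f i := by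
          refine sum_le_sum fun i hi => ?_
          rw [hpow _ (hf i hi)]
          have hle : f i ≤ n / s := by rw [le_div_iff₀ hs, mul_comm]; exact hfs i hi
          exact mul_le_mul_of_nonneg_right
            (Real.rpow_le_rpow (hf i hi) hle (by linarith)) (hf i hi)
      _ ≤ (n / s) ^ (p - 1) * n := by rw [← mul_sum]; gcongr
      _ = n ^ p * s ^ (1 - p) := by
          rw [Real.div_rpow hn hs.le, div_mul_eq_mul_div, ← hpow n hn, div_eq_mul_inv,
            ← Real.rpow_neg hs.le, neg_sub]
  calc (∑ i ∈ T, f i ^ p) ^ (1 / p) ≤ (n ^ p * s ^ (1 - p)) ^ (1 / p) := by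
        gcongr
        exact sum_nonneg fun i hi => Real.rpow_nonneg (hf i hi) p
    _ = s ^ (1 / p - 1) * n := by
        rw [Real.mul_rpow (by positivity) (by positivity), ← Real.rpow_mul hn,
          ← Real.rpow_mul hs.le, mul_one_div_cancel hp0, Real.rpow_one, mul_comm]
        congr 2
        field_simp

theorem one_sub_mul_sum_norm_sub_le [Fintype ι] [DecidableEq ι] (z w : ι → ℂ)
    (S : Finset ι) {ρ T : ℝ} (hρ : -1 ≤ ρ)
    (h : ∑ i ∈ S, ‖z i - w i‖ ≤ ρ * ∑ i ∈ Sᶜ, ‖z i - w i‖ + T) :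
    (1 - ρ) * ∑ i, ‖z i - w i‖ ≤
      (1 + ρ) * (∑ i, ‖z i‖ - ∑ i, ‖w i‖ + 2 * ∑ i ∈ Sᶜ, ‖w i‖) + 2 * T := by
  have hz := sum_add_sum_compl S fun i => ‖z i‖
  have hw := sum_add_sum_compl S fun i => ‖w i‖
  have hv := sum_add_sum_compl S fun i => ‖z i - w i‖
  have hcompl : ∑ i ∈ Sᶜ, ‖z i - w i‖ ≤ ∑ i ∈ Sᶜ, ‖z i‖ + ∑ i ∈ Sᶜ, ‖w i‖ := by
    rw [← sum_add_distrib]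
    exact sum_le_sum fun i _ => norm_sub_le _ _
  have hS : ∑ i ∈ S, ‖w i‖ ≤ ∑ i ∈ S, ‖z i‖ + ∑ i ∈ S, ‖z i - w i‖ := by
    rw [← sum_add_distrib]
    exact sum_le_sum fun i _ => norm_le_norm_add_norm_sub _ _
  have hcone : ∑ i ∈ Sᶜ, ‖z i - w i‖ ≤
      ∑ i, ‖z i‖ - ∑ i, ‖w i‖ + 2 * ∑ i ∈ Sᶜ, ‖w i‖ + ∑ i ∈ S, ‖z i - w i‖ := by
    linarith
  rw [← hv]
  linarith [mul_le_mul_of_nonneg_left hcone (by linarith : 0 ≤ 1 + ρ)]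

end FiniteSums

section LpNorm

variable {n : ℕ}

theorem lpNorm_one (x : Fin n → ℂ) : lpNorm 1 x = ∑ i, ‖x i‖ := by
  simp [lpNorm]

theorem lpNorm_restrictTo (S : Finset (Fin n)) (v : Fin n → ℂ) {p : ℝ} (hp : p ≠ 0) :
    lpNorm p (restrictTo S v) = (∑ i ∈ S, ‖v i‖ ^ p) ^ (1 / p) := by
  rw [lpNorm]
  congr 1
  rw [← sum_subset (subset_univ S)]
  · exact sum_congr rfl fun i hi => by simp [restrictTo, hi]
  · intro i _ hi
    simp [restrictTo, hi, Real.zero_rpow hp]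

theorem lpNorm_one_restrictTo (S : Finset (Fin n)) (v : Fin n → ℂ) :
    lpNorm 1 (restrictTo S v) = ∑ i ∈ S, ‖v i‖ := by
  simp [lpNorm_restrictTo S v one_ne_zero]

theorem lpNorm_le_add_compl (S : Finset (Fin n)) (v : Fin n → ℂ) {p : ℝ} (hp : 1 ≤ p) :
    lpNorm p v ≤ (∑ i ∈ S, ‖v i‖ ^ p) ^ (1 / p) + (∑ i ∈ Sᶜ, ‖v i‖ ^ p) ^ (1 / p) := by
  rw [lpNorm, ← sum_add_sum_compl S]
  exact Real.rpow_add_le_add_rpow (sum_nonneg fun i _ => by positivity)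
    (sum_nonneg fun i _ => by positivity) (by positivity)
    (by simpa using inv_le_one_of_one_le₀ hp)

theorem sum_compl_norm_le_bestApprox1 {s : ℕ} (w : Fin n → ℂ) (S : Finset (Fin n))
    (hmax : ∀ T : Finset (Fin n), #T ≤ s → ∑ i ∈ T, ‖w i‖ ≤ ∑ i ∈ S, ‖w i‖) :
    ∑ i ∈ Sᶜ, ‖w i‖ ≤ bestApprox1 s w := by
  refine le_csInf ⟨_, 0, ⟨∅, by simp⟩, rfl⟩ ?_
  rintro _ ⟨u, ⟨T, hT, hu⟩, rfl⟩
  have hsplit : ∀ R : Finset (Fin n), ∑ i ∈ Rᶜ, ‖w i‖ = ∑ i, ‖w i‖ - ∑ i ∈ R, ‖w i‖ :=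
    fun R => eq_sub_of_add_eq' (sum_add_sum_compl R _)
  calc ∑ i ∈ Sᶜ, ‖w i‖ ≤ ∑ i ∈ Tᶜ, ‖w i‖ := by
        rw [hsplit, hsplit]; linarith [hmax T hT]
    _ = ∑ i ∈ Tᶜ, ‖(w - u) i‖ :=
        sum_congr rfl fun i hi => by simp [hu i (mem_compl.1 hi)]
    _ ≤ lpNorm 1 (w - u) := by
        rw [lpNorm_one]
        exact sum_le_sum_of_subset_of_nonneg (subset_univ _) fun _ _ _ => norm_nonneg _

end LpNorm

namespace RNSP

variable {m N : ℕ} {A : Matrix (Fin m) (Fin N) ℂ} {nn : (Fin m → ℂ) → ℝ} {q : ℝ} {s : ℕ}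
  {ρ τ : ℝ}

theorem rpow_sum_rpow_le (h : RNSP A nn q s ρ τ) (hs : 1 ≤ s) {p : ℝ} (hp : 0 < p)
    (hpq : p ≤ q) {S : Finset (Fin N)} (hS : #S ≤ s) (v : Fin N → ℂ) :
    (∑ i ∈ S, ‖v i‖ ^ p) ^ (1 / p) ≤
      (s : ℝ) ^ (1 / p - 1) * ρ * ∑ i ∈ Sᶜ, ‖v i‖ +
        (s : ℝ) ^ (1 / p - 1 / q) * τ * nn (A.mulVec v) := by
  have hs0 : (0 : ℝ) < s := by exact_mod_cast hs
  have hq : 0 < q := hp.trans_le hpq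
  have hNSP := h S hS v
  rw [lpNorm_restrictTo S v hq.ne', lpNorm_one_restrictTo] at hNSP
  have hexp : 0 ≤ 1 / p - 1 / q := sub_nonneg.2 (one_div_le_one_div_of_le hp hpq)
  calc (∑ i ∈ S, ‖v i‖ ^ p) ^ (1 / p)
      ≤ (#S : ℝ) ^ (1 / p - 1 / q) * (∑ i ∈ S, ‖v i‖ ^ q) ^ (1 / q) :=
        rpow_sum_rpow_le_card_rpow_mul S (fun i _ => norm_nonneg _) hp hpq
    _ ≤ (s : ℝ) ^ (1 / p - 1 / q) * (∑ i ∈ S, ‖v i‖ ^ q) ^ (1 / q) := by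
        gcongr
    _ ≤ (s : ℝ) ^ (1 / p - 1 / q) *
          ((s : ℝ) ^ (1 / q - 1) * ρ * ∑ i ∈ Sᶜ, ‖v i‖ + τ * nn (A.mulVec v)) := by
        gcongr
    _ = _ := by
        rw [mul_add, ← mul_assoc, ← mul_assoc, ← Real.rpow_add hs0, sub_add_sub_cancel,
          mul_assoc _ τ]

theorem lpNorm_le (h : RNSP A nn q s ρ τ) (hs : 1 ≤ s) (hρ : 0 ≤ ρ) {p : ℝ} (hp : 1 ≤ p)
    (hpq : p ≤ q) (v : Fin N → ℂ) :
    lpNorm p v ≤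
      (s : ℝ) ^ (1 / p - 1) * (1 + ρ) * lpNorm 1 v +
        (s : ℝ) ^ (1 / p - 1 / q) * τ * nn (A.mulVec v) := by
  classical
  have hs0 : (0 : ℝ) < s := by exact_mod_cast hs
  obtain ⟨S, hS, hmax⟩ := exists_card_le_forall_sum_le (fun i => ‖v i‖) s
  have hcompl : ∑ i ∈ Sᶜ, ‖v i‖ ≤ lpNorm 1 v := by
    rw [lpNorm_one]
    exact sum_le_sum_of_subset_of_nonneg (subset_univ _) fun _ _ _ => norm_nonneg _
  have hhead := rpow_sum_rpow_le h hs (by positivity) hpq hS v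
  have htail : (∑ i ∈ Sᶜ, ‖v i‖ ^ p) ^ (1 / p) ≤ (s : ℝ) ^ (1 / p - 1) * lpNorm 1 v := by
    refine rpow_sum_rpow_le_of_mul_le Sᶜ (fun i _ => norm_nonneg _) hs0 hp (fun i hi => ?_)
      hcompl
    refine (card_mul_le_sum_of_forall_sum_le (fun _ => norm_nonneg _) hS hmax
      (mem_compl.1 hi)).trans ?_
    rw [lpNorm_one]
    exact sum_le_sum_of_subset_of_nonneg (subset_univ _) fun _ _ _ => norm_nonneg _
  have hρcompl := mul_le_mul_of_nonneg_left hcompl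
    (by positivity : (0 : ℝ) ≤ (s : ℝ) ^ (1 / p - 1) * ρ)
  linarith [lpNorm_le_add_compl S v hp]

theorem lpNorm_one_sub_le (h : RNSP A nn q s ρ τ) (hs : 1 ≤ s) (hq : 1 ≤ q) (hρ : 0 ≤ ρ)
    (z w : Fin N → ℂ) :
    (1 - ρ) * lpNorm 1 (z - w) ≤
      (1 + ρ) * (lpNorm 1 z - lpNorm 1 w + 2 * bestApprox1 s w) +
        2 * ((s : ℝ) ^ (1 - 1 / q) * τ * nn (A.mulVec (z - w))) := by
  classical
  obtain ⟨S, hS, hmax⟩ := exists_card_le_forall_sum_le (fun i => ‖w i‖) s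
  have hNSP := rpow_sum_rpow_le h hs one_pos hq hS (z - w)
  simp only [Real.rpow_one, div_one, sub_self, Real.rpow_zero, one_mul, Pi.sub_apply] at hNSP
  have key := one_sub_mul_sum_norm_sub_le z w S (by linarith) hNSP
  have hσ := sum_compl_norm_le_bestApprox1 w S hmax
  simp only [lpNorm_one, Pi.sub_apply]
  linarith [mul_le_mul_of_nonneg_left hσ (by linarith : 0 ≤ 1 + ρ)]

end RNSP

theorem stmt19_general {m N : ℕ} (A : Matrix (Fin m) (Fin N) ℂ)
    (nn : (Fin m → ℂ) → ℝ)
    (q : ℝ) (hq : 1 ≤ q) (s : ℕ) (hs : 1 ≤ s)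
    (ρ τ : ℝ) (hρ0 : 0 < ρ) (hρ1 : ρ < 1)
    (hNSP : RNSP A nn q s ρ τ)
    (p : ℝ) (hp1 : 1 ≤ p) (hpq : p ≤ q)
    (z w : Fin N → ℂ) :
    lpNorm p (z - w) ≤
      (1 + ρ) ^ 2 / (1 - ρ) / (s : ℝ) ^ ((1 : ℝ) - 1 / p)
          * (lpNorm 1 z - lpNorm 1 w + 2 * bestApprox1 s w)
      + (3 + ρ) * τ / (1 - ρ) / (s : ℝ) ^ ((1 : ℝ) / q - 1 / p)
          * nn (A.mulVec (z - w)) := by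
  set Δ := lpNorm 1 z - lpNorm 1 w + 2 * bestApprox1 s w
  set E := nn (A.mulVec (z - w))
  set a := (s : ℝ) ^ ((1 : ℝ) - 1 / p)
  set b := (s : ℝ) ^ ((1 : ℝ) / q - 1 / p)
  have hs0 : (0 : ℝ) < s := by exact_mod_cast hs
  have ha : (s : ℝ) ^ (1 / p - 1) = a⁻¹ := by
    rw [← Real.rpow_neg hs0.le, neg_sub]
  have hb : (s : ℝ) ^ (1 / p - 1 / q) = b⁻¹ := by
    rw [← Real.rpow_neg hs0.le, neg_sub]
  have hab : (s : ℝ) ^ (1 - 1 / q) = a / b := by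
    rw [← Real.rpow_sub hs0, sub_sub_sub_cancel_right]
  have hℓp := RNSP.lpNorm_le hNSP hs hρ0.le hp1 hpq (z - w)
  have hℓ1 := RNSP.lpNorm_one_sub_le hNSP hs hq hρ0.le z w
  rw [ha, hb] at hℓp
  have hρ : 0 < 1 - ρ := by linarith
  rw [hab, ← le_div_iff₀' hρ] at hℓ1
  have ha0 : a ≠ 0 := (Real.rpow_pos_of_pos hs0 _).ne'
  calc lpNorm p (z - w) ≤ a⁻¹ * (1 + ρ) * lpNorm 1 (z - w) + b⁻¹ * τ * E := hℓp
    _ ≤ a⁻¹ * (1 + ρ) * (((1 + ρ) * Δ + 2 * (a / b * τ * E)) / (1 - ρ)) + b⁻¹ * τ * E := by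
        gcongr
    _ = _ := by
        field_simp
        ring

/-- Under the `ℓ^q`-RNSP of order `s` with constants `ρ, τ` relative to `‖·‖`, for all
`1 ≤ p ≤ q` and all `z, w ∈ ℂ^N`:
`‖z − w‖_p ≤ (C/s^(1−1/p))(‖z‖₁ − ‖w‖₁ + 2σ_s(w)₁) + (D/s^(1/q−1/p)) ‖A(z−w)‖`,
where `C = (1+ρ)²/(1−ρ)` and `D = (3+ρ)τ/(1−ρ)`. -/
theorem stmt19 {m N : ℕ} (A : Matrix (Fin m) (Fin N) ℂ)
    (nn : (Fin m → ℂ) → ℝ)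
    (nn_add : ∀ x y, nn (x + y) ≤ nn x + nn y)
    (nn_smul : ∀ (c : ℂ) x, nn (c • x) = ‖c‖ * nn x)
    (nn_eq_zero : ∀ x, nn x = 0 ↔ x = 0)
    (q : ℝ) (hq : 1 ≤ q) (s : ℕ) (hs : 1 ≤ s)
    (ρ τ : ℝ) (hρ0 : 0 < ρ) (hρ1 : ρ < 1) (hτ : 0 < τ)
    (hNSP : RNSP A nn q s ρ τ)
    (p : ℝ) (hp1 : 1 ≤ p) (hpq : p ≤ q)
    (z w : Fin N → ℂ) :
    lpNorm p (z - w) ≤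
      (1 + ρ) ^ 2 / (1 - ρ) / (s : ℝ) ^ ((1 : ℝ) - 1 / p)
          * (lpNorm 1 z - lpNorm 1 w + 2 * bestApprox1 s w)
      + (3 + ρ) * τ / (1 - ρ) / (s : ℝ) ^ ((1 : ℝ) / q - 1 / p)
          * nn (A.mulVec (z - w)) :=
  stmt19_general A nn q hq s hs ρ τ hρ0 hρ1 hNSP p hp1 hpq z w
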